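/- With the setup above (H connected non-bipartite, S a maximal independent set, Q(H) = [[Q+D1, K],[K^T, D2]], μ = μ(H)), the smallest eigenvalue of the matrix Q_μ = Q + D1 + K(μI − D2)^{-1}K^T is exactly μ. -/

import Mathlib

open Matrix SimpleGraph Finset

/-- The signless Laplacian matrix `Q(G) = D(G) + A(G)` of a simple graph. -/
def signlessLap {V : Type*} [Fintype V] [DecidableEq V] (G : SimpleGraph V)
    [DecidableRel G.Adj] : Matrix V V ℝ :=
  G.degMatrix ℝ + G.adjMatrix ℝ

/-!
Since `μ` is the least eigenvalue of `Q(H)`, the matrix `Q(H) - μI` is positive semidefinite, and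
`μ < deg b` for every `b ∈ S`, so its `S`-block `D₂ - μI` is positive definite. By the
Haynsworth criterion the Schur complement of that block, which is `Q_μ - μI`, is positive
semidefinite: every eigenvalue of `Q_μ` is at least `μ`. Conversely, the `S`-rows of the
eigenvalue equation of a `μ`-eigenvector `(u, z)` of `Q(H)` give `z = (μI - D₂)⁻¹ Kᵀ u`, and then
its `T`-rows say `Q_μ u = μ u`; here `u ≠ 0` because `z` is determined by `u`.
-/

namespace Matrix

variable {m n F : Type*} [Fintype m] [Fintype n] [DecidableEq n]

theorem mulVec_add_mul_diagonal_mul_eq_smul_of_fromBlocks [Field F]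
    (A : Matrix m m F) (B : Matrix m n F) (C : Matrix n m F) (d : n → F) {c : F}
    (hd : ∀ b, c ≠ d b) {x : m ⊕ n → F}
    (hx : fromBlocks A B C (diagonal d) *ᵥ x = c • x) :
    x ∘ Sum.inr = diagonal (fun b => (c - d b)⁻¹) *ᵥ (C *ᵥ (x ∘ Sum.inl)) ∧
      (A + B * diagonal (fun b => (c - d b)⁻¹) * C) *ᵥ (x ∘ Sum.inl) = c • (x ∘ Sum.inl) := by
  rw [fromBlocks_mulVec] at hx
  have htop := congrArg (· ∘ Sum.inl) hx
  have hbot := congrArg (· ∘ Sum.inr) hx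
  simp only [Sum.elim_comp_inl, Sum.elim_comp_inr] at htop hbot
  have hz : x ∘ Sum.inr = diagonal (fun b => (c - d b)⁻¹) *ᵥ (C *ᵥ (x ∘ Sum.inl)) := by
    funext b
    have hb := congrFun hbot b
    simp only [Pi.add_apply, mulVec_diagonal, Function.comp_apply, Pi.smul_apply,
      smul_eq_mul] at hb ⊢
    rw [eq_inv_mul_iff_mul_eq₀ (sub_ne_zero.mpr (hd b))]
    linear_combination -hb
  refine ⟨hz, ?_⟩
  rw [add_mulVec, ← mulVec_mulVec, ← mulVec_mulVec, ← hz, htop]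
  rfl

theorem PosSemidef.apply_eq_zero_of_apply_self_eq_zero {A : Matrix n n ℝ} (hA : A.PosSemidef)
    {i : n} (hi : A i i = 0) (j : n) : A j i = 0 := by
  have hcol : A *ᵥ Pi.single i 1 = 0 :=
    (hA.dotProduct_mulVec_zero_iff _).mp (by simp [hi])
  simpa using congrFun hcol j

theorem posSemidef_sub_smul_one_of_forall_le {M : Matrix n n ℝ} (hM : M.IsHermitian) {μ : ℝ}
    (hmin : ∀ (ν : ℝ) (x : n → ℝ), x ≠ 0 → M *ᵥ x = ν • x → μ ≤ ν) :
    (M - μ • 1).PosSemidef := by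
  have hN : (M - μ • 1).IsHermitian := hM.sub (isHermitian_one.smul (IsSelfAdjoint.all μ))
  refine hN.posSemidef_iff_eigenvalues_nonneg.mpr fun i => ?_
  set v : n → ℝ := ⇑(hN.eigenvectorBasis i)
  have hv : v ≠ 0 := fun h =>
    hN.eigenvectorBasis.orthonormal.ne_zero i ((WithLp.ofLp_eq_zero 2).mp h)
  have hMv : M *ᵥ v = (hN.eigenvalues i + μ) • v := by
    rw [add_smul, ← hN.mulVec_eigenvectorBasis i, sub_mulVec, smul_mulVec, one_mulVec,
      sub_add_cancel]
  simpa using hmin _ v hv hMv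

theorem PosSemidef.le_of_mulVec_eq_smul {M : Matrix n n ℝ} {μ ν : ℝ}
    (hM : (M - μ • 1).PosSemidef) {w : n → ℝ} (hw : w ≠ 0) (hMw : M *ᵥ w = ν • w) :
    μ ≤ ν := by
  have hquad : 0 ≤ (ν - μ) * (w ⬝ᵥ w) := by
    have := hM.dotProduct_mulVec_nonneg w
    rwa [star_trivial, sub_mulVec, smul_mulVec, one_mulVec, hMw, ← sub_smul,
      dotProduct_smul, smul_eq_mul] at this
  have hww : 0 < w ⬝ᵥ w := by simpa using dotProduct_star_self_pos_iff.mpr hw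
  exact sub_nonneg.mp (nonneg_of_mul_nonneg_left hquad hww)

theorem PosSemidef.add_mul_diagonal_mul_transpose_sub_smul_one [DecidableEq m]
    {A : Matrix m m ℝ} {B : Matrix m n ℝ} {d : n → ℝ} {μ : ℝ} (hd : ∀ b, μ < d b)
    (h : (fromBlocks A B Bᵀ (diagonal d) - μ • 1).PosSemidef) :
    (A + B * diagonal (fun b => (μ - d b)⁻¹) * Bᵀ - μ • 1).PosSemidef := by
  have hD : (diagonal fun b => d b - μ).PosDef :=
    posDef_diagonal_iff.mpr fun b => sub_pos.mpr (hd b)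
  have : Invertible (diagonal fun b => d b - μ) := hD.isUnit.invertible
  have hblocks : fromBlocks A B Bᵀ (diagonal d) - μ • 1 =
      fromBlocks (A - μ • 1) B Bᴴ (diagonal fun b => d b - μ) := by
    ext (i | i) (j | j) <;> simp [one_apply, diagonal_apply, ite_sub_ite]
  rw [hblocks, PosDef.fromBlocks₂₂ _ _ hD] at h
  have hschur : A + B * diagonal (fun b => (μ - d b)⁻¹) * Bᵀ - μ • 1 =
      A - μ • 1 - B * (diagonal fun b => d b - μ)⁻¹ * Bᴴ := by
    have hinv : (diagonal fun b => d b - μ)⁻¹ = -diagonal fun b => (μ - d b)⁻¹ := by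
      refine inv_eq_left_inv ?_
      rw [neg_mul, diagonal_mul_diagonal, ← diagonal_one, diagonal_neg]
      congr 1
      funext b
      rw [← neg_mul, neg_inv, neg_sub, inv_mul_cancel₀ (sub_pos.mpr (hd b)).ne']
    rw [hinv, conjTranspose_eq_transpose_of_trivial, Matrix.mul_neg, Matrix.neg_mul]
    abel
  rwa [hschur]

theorem PosSemidef.lt_apply_self_of_sub_smul_one {M : Matrix n n ℝ} {μ : ℝ}
    (hM : (M - μ • 1).PosSemidef) {i j : n} (hji : j ≠ i) (hM_ji : M j i ≠ 0) :
    μ < M i i := by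
  have hdiag : 0 ≤ (M - μ • 1) i i := hM.diag_nonneg
  refine lt_of_le_of_ne (by simpa using hdiag) fun hμ => hM_ji ?_
  simpa [hji] using hM.apply_eq_zero_of_apply_self_eq_zero (i := i) (by simp [← hμ]) j

end Matrix

theorem SimpleGraph.Connected.exists_adj_of_ne_bot {V : Type*} {G : SimpleGraph V}
    (hG : G.Connected) (hne : G ≠ ⊥) (v : V) : ∃ u, G.Adj v u := by
  obtain ⟨x, y, hxy⟩ := ne_bot_iff_exists_adj.mp hne
  have : Nontrivial V := ⟨⟨x, y, hxy.ne⟩⟩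
  exact hG.preconnected.exists_adj_of_nontrivial v

section signlessLap

variable {V : Type*} [Fintype V] [DecidableEq V] (G : SimpleGraph V) [DecidableRel G.Adj]

theorem signlessLap_apply (u v : V) :
    signlessLap G u v =
      (if u = v then (G.degree u : ℝ) else 0) + (if G.Adj u v then 1 else 0) := by
  simp [signlessLap, degMatrix, diagonal_apply]

theorem isHermitian_signlessLap : (signlessLap G).IsHermitian :=
  (G.isHermitian_degMatrix (R := ℝ)).add (G.isHermitian_adjMatrix ℝ)

end signlessLap

theorem signlessLap_eq_fromBlocks {α β : Type*} [Fintype α] [Fintype β] [DecidableEq α]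
    [DecidableEq β] (H : SimpleGraph (α ⊕ β)) [DecidableRel H.Adj]
    (hind : ∀ a b : β, ¬ H.Adj (Sum.inr a) (Sum.inr b)) :
    signlessLap H = fromBlocks (signlessLap H).toBlocks₁₁ (signlessLap H).toBlocks₁₂
      (signlessLap H).toBlocks₁₂ᵀ (diagonal fun b => (H.degree (Sum.inr b) : ℝ)) := by
  conv_lhs => rw [← fromBlocks_toBlocks (signlessLap H)]
  congr
  · ext b a
    simpa [toBlocks₂₁, toBlocks₁₂] using
      ((isHermitian_signlessLap H).apply (Sum.inr b) (Sum.inl a)).symm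
  · ext b b'
    simp [toBlocks₂₂, signlessLap_apply, diagonal_apply, hind]

theorem stmt13_general {α β : Type*} [Fintype α] [Fintype β] [DecidableEq α] [DecidableEq β]
    (H : SimpleGraph (α ⊕ β)) [DecidableRel H.Adj]
    (hconn : H.Connected) (hnbip : ¬ H.Colorable 2)
    (hind : ∀ a b : β, ¬ H.Adj (Sum.inr a) (Sum.inr b))
    (μ : ℝ)
    (hμ : ∃ x : α ⊕ β → ℝ, x ≠ 0 ∧ signlessLap H *ᵥ x = μ • x)
    (hmin : ∀ (ν : ℝ) (x : α ⊕ β → ℝ), x ≠ 0 → signlessLap H *ᵥ x = ν • x → μ ≤ ν)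
    (Qμ : Matrix α α ℝ)
    (hQμ : ∀ i j : α, Qμ i j = signlessLap H (Sum.inl i) (Sum.inl j) +
      ∑ b : β, (if H.Adj (Sum.inl i) (Sum.inr b) then (1 : ℝ) else 0) *
        (if H.Adj (Sum.inl j) (Sum.inr b) then (1 : ℝ) else 0) /
          (μ - (H.degree (Sum.inr b) : ℝ))) :
    (∃ w : α → ℝ, w ≠ 0 ∧ Qμ *ᵥ w = μ • w) ∧
      (∀ (ν : ℝ) (w : α → ℝ), w ≠ 0 → Qμ *ᵥ w = ν • w → μ ≤ ν) := by
  set K := (signlessLap H).toBlocks₁₂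
  set d : β → ℝ := fun b => H.degree (Sum.inr b)
  have hQμ_eq :
      Qμ = (signlessLap H).toBlocks₁₁ + K * diagonal (fun b => (μ - d b)⁻¹) * Kᵀ := by
    ext i j
    rw [hQμ, Matrix.add_apply, mul_apply]
    congr 1
    refine Finset.sum_congr rfl fun b _ => ?_
    simp only [mul_diagonal, transpose_apply, K, d, toBlocks₁₂, of_apply, signlessLap_apply,
      reduceCtorEq, if_false, zero_add]
    ring
  have hpsd := posSemidef_sub_smul_one_of_forall_le (isHermitian_signlessLap H) hmin
  -- `μ ≤ deg b` is a diagonal entry of `Q(H) - μI`; equality would kill the whole column at `b`,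
  -- whose entry at a neighbour of `b` is `1`.
  have hd : ∀ b, μ < d b := by
    intro b
    have hne : H ≠ ⊥ := fun h => hnbip ((colorable_one_iff.mpr h).mono one_le_two)
    obtain ⟨u, hu⟩ := hconn.exists_adj_of_ne_bot hne (Sum.inr b)
    simpa [signlessLap_apply] using
      hpsd.lt_apply_self_of_sub_smul_one hu.ne' (by simp [signlessLap_apply, hu.ne', hu.symm])
  rw [signlessLap_eq_fromBlocks H hind] at hpsd hμ
  refine ⟨?_, fun ν w hw hQw => ?_⟩
  · obtain ⟨x, hx0, hx⟩ := hμ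
    obtain ⟨hz, hw⟩ :=
      mulVec_add_mul_diagonal_mul_eq_smul_of_fromBlocks _ K Kᵀ d (fun b => (hd b).ne) hx
    refine ⟨x ∘ Sum.inl, fun h => hx0 ?_, hQμ_eq ▸ hw⟩
    rw [h, mulVec_zero, mulVec_zero] at hz
    rw [← Sum.elim_comp_inl_inr x, h, hz, Sum.elim_zero_zero]
  · have hschur := hpsd.add_mul_diagonal_mul_transpose_sub_smul_one hd
    exact (hQμ_eq ▸ hschur).le_of_mulVec_eq_smul hw hQw

/-- With `H` connected non-bipartite on vertex set `T ⊕ S` (`S` = the `inr`-side being a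
maximal independent set) and `μ = μ(H)`, the matrix
`Q_μ = Q + D₁ + K (μI − D₂)⁻¹ Kᵀ` — whose `(i,j)` entry is the `(i,j)` entry of the
`T`-block of `Q(H)` plus `Σ_{b ∈ S} K_{ib} K_{jb} / (μ − deg b)` — has smallest
eigenvalue exactly `μ`. -/
theorem stmt13 {α β : Type*} [Fintype α] [Fintype β] [DecidableEq α] [DecidableEq β]
    (H : SimpleGraph (α ⊕ β)) [DecidableRel H.Adj]
    (hconn : H.Connected) (hnbip : ¬ H.Colorable 2)
    (hind : ∀ a b : β, ¬ H.Adj (Sum.inr a) (Sum.inr b))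
    (hmaxind : ∀ a : α, ∃ b : β, H.Adj (Sum.inr b) (Sum.inl a))
    (μ : ℝ)
    (hμ : ∃ x : α ⊕ β → ℝ, x ≠ 0 ∧ signlessLap H *ᵥ x = μ • x)
    (hmin : ∀ (ν : ℝ) (x : α ⊕ β → ℝ), x ≠ 0 → signlessLap H *ᵥ x = ν • x → μ ≤ ν)
    (Qμ : Matrix α α ℝ)
    (hQμ : ∀ i j : α, Qμ i j = signlessLap H (Sum.inl i) (Sum.inl j) +
      ∑ b : β, (if H.Adj (Sum.inl i) (Sum.inr b) then (1 : ℝ) else 0) *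
        (if H.Adj (Sum.inl j) (Sum.inr b) then (1 : ℝ) else 0) /
          (μ - (H.degree (Sum.inr b) : ℝ))) :
    (∃ w : α → ℝ, w ≠ 0 ∧ Qμ *ᵥ w = μ • w) ∧
      (∀ (ν : ℝ) (w : α → ℝ), w ≠ 0 → Qμ *ᵥ w = ν • w → μ ≤ ν) :=
  stmt13_general H hconn hnbip hind μ hμ hmin Qμ hQμ
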